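/- Fix constants c1 > 0, d > 1 and c > 0, and let x, y ∈ [−1, 1]. With r_d := √((d − xy)² − (1 − x²)(1 − y²)) one has that the bracket B := 4d²(r_d + x − dy)² + c1²(1 + y)²(r_d² + (dx − y)(1 + y) + (d + x) r_d)² is strictly positive, and hence the metric potential e^M := (c/r_d)·B satisfies 0 < e^M < ∞ on the entire closed Gowdy square. -/
import Mathlib


open Real Set

/-- Positivity of the metric potential `e^M = (c/r_d)·B` of the exact solution on
the entire closed Gowdy square: the bracket
`B = 4d²(r_d + x − dy)² + c1²(1 + y)²(r_d² + (dx − y)(1 + y) + (d + x)r_d)²`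
is strictly positive, and hence `0 < e^M`. -/
theorem exact_solution_eM_positive
    (c1 d c x y rd : ℝ) (hc1 : 0 < c1) (hd : 1 < d) (hc : 0 < c)
    (hx : x ∈ Icc (-1 : ℝ) 1) (hy : y ∈ Icc (-1 : ℝ) 1)
    (hrd : rd = Real.sqrt ((d - x * y) ^ 2 - (1 - x ^ 2) * (1 - y ^ 2))) :
    0 < 4 * d ^ 2 * (rd + x - d * y) ^ 2
        + c1 ^ 2 * (1 + y) ^ 2 * (rd ^ 2 + (d * x - y) * (1 + y) + (d + x) * rd) ^ 2 ∧
    0 < (c / rd) *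
        (4 * d ^ 2 * (rd + x - d * y) ^ 2
          + c1 ^ 2 * (1 + y) ^ 2 * (rd ^ 2 + (d * x - y) * (1 + y) + (d + x) * rd) ^ 2) := by
  obtain ⟨hx1, hx2⟩ := hx
  obtain ⟨hy1, hy2⟩ := hy
  have hR : 0 < (d - x * y) ^ 2 - (1 - x ^ 2) * (1 - y ^ 2) := by
    nlinarith [sq_nonneg (x - y), sq_nonneg (x + y),
      mul_nonneg (by linarith : (0:ℝ) ≤ 1 - x) (by linarith : (0:ℝ) ≤ 1 + x),
      mul_nonneg (by linarith : (0:ℝ) ≤ 1 - y) (by linarith : (0:ℝ) ≤ 1 + y)]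
  have hrdpos : 0 < rd := hrd ▸ Real.sqrt_pos.mpr hR
  have hrd2 : rd ^ 2 = (d - x * y) ^ 2 - (1 - x ^ 2) * (1 - y ^ 2) := by
    rw [hrd, sq, Real.mul_self_sqrt hR.le]
  have hB : 0 < 4 * d ^ 2 * (rd + x - d * y) ^ 2
      + c1 ^ 2 * (1 + y) ^ 2 * (rd ^ 2 + (d * x - y) * (1 + y) + (d + x) * rd) ^ 2 := by
    rcases lt_or_eq_of_le (show (0:ℝ) ≤ 4 * d ^ 2 * (rd + x - d * y) ^ 2 by positivity)
      with h1 | h1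
    · nlinarith [mul_nonneg (mul_nonneg (sq_nonneg c1) (sq_nonneg (1 + y)))
        (sq_nonneg (rd ^ 2 + (d * x - y) * (1 + y) + (d + x) * rd))]
    · -- first square vanishes: rd + x - d*y = 0
      have hA : rd + x - d * y = 0 := by
        have h3 : d ^ 2 * (rd + x - d * y) ^ 2 = 0 := by linarith
        rcases mul_eq_zero.mp h3 with h | h
        · exact absurd h (by positivity)
        · exact pow_eq_zero_iff two_ne_zero |>.mp h
      have hrdval : rd = d * y - x := by linarith
      have hy' : 0 < 1 + y := by
        rcases eq_or_lt_of_le hy1 with h | h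
        · exfalso
          have : rd = -d - x := by rw [hrdval, ← h]; ring
          linarith
        · linarith
      have hC : rd ^ 2 + (d * x - y) * (1 + y) + (d + x) * rd ≠ 0 := by
        intro h0
        rw [hrdval] at h0
        have key : (d ^ 2 - 1) * (y * (1 + y)) = 0 := by linear_combination h0
        have hd2 : d ^ 2 - 1 ≠ 0 := by nlinarith
        have hy0 : y = 0 := by
          rcases mul_eq_zero.mp key with h | h
          · exact absurd h hd2
          · rcases mul_eq_zero.mp h with h' | h'
            · exact h'
            · exact absurd h' (by linarith)
        subst hy0
        have hrdx : rd ^ 2 = x ^ 2 := by rw [hrdval]; ring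
        nlinarith [hrd2, hrdx]
      have hCpos : 0 < (rd ^ 2 + (d * x - y) * (1 + y) + (d + x) * rd) ^ 2 :=
        (sq_nonneg _).lt_of_ne (Ne.symm (pow_ne_zero 2 hC))
      have : 0 < c1 ^ 2 * (1 + y) ^ 2 *
          (rd ^ 2 + (d * x - y) * (1 + y) + (d + x) * rd) ^ 2 :=
        mul_pos (mul_pos (pow_pos hc1 2) (pow_pos hy' 2)) hCpos
      linarith
  exact ⟨hB, mul_pos (div_pos hc hrdpos) hB⟩
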